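/- arXiv:math/0411349 — 7 statements merged into one kernel-verified Lean document; each statement's English description precedes it below -/
import Mathlib

section
/- Let U be a nonprincipal ultrafilter on the set of prime numbers, and for each prime p let F̄_p denote an algebraic closure of the field with p elements (e.g., AlgebraicClosure (ZMod p)). Then the field ℂ of complex numbers is isomorphic as a ring to the ultraproduct (∏_p F̄_p)/I_U. -/
/-! The ultraproduct of the fields `F̄_p` is a field. It is algebraically closed because a monic
polynomial over it lifts to monic polynomials of the same degree over every `F̄_p`, whose roots
assemble into a root; it has characteristic zero because a fixed `n ≠ 0` is nonzero in `F̄_p` for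
all `p > n`, a set that a nonprincipal ultrafilter contains. Its cardinality is `𝔠`: at most
`ℵ₀ ^ ℵ₀` as a quotient of a countable product of countable fields, and at least `2 ^ ℵ₀` by an
almost-disjoint coding of binary sequences. By Steinitz, an algebraically closed field of
characteristic zero and uncountable cardinality is determined up to isomorphism by its
cardinality, so it is isomorphic to `ℂ`. -/

def ultraIdeal {ι : Type*} (R : ι → Type*) [∀ i, CommRing (R i)] (U : Ultrafilter ι) :
    Ideal (∀ i, R i) where
  carrier := {f | {i | f i = 0} ∈ U}
  zero_mem' := Filter.univ_mem' (fun i => rfl)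
  add_mem' := by
    intro f g hf hg
    refine U.toFilter.mem_of_superset (Filter.inter_mem hf hg) ?_
    rintro i ⟨hfi, hgi⟩
    simp only [Set.mem_setOf_eq] at *
    rw [Pi.add_apply, hfi, hgi, add_zero]
  smul_mem' := by
    intro c f hf
    refine U.toFilter.mem_of_superset hf ?_
    intro i hfi
    simp only [Set.mem_setOf_eq] at *
    rw [smul_eq_mul, Pi.mul_apply, hfi, mul_zero]

/-- An algebraic closure of the prime field with `p` elements. -/
def FBar (p : Nat.Primes) : Type :=
  haveI : Fact p.1.Prime := ⟨p.2⟩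
  AlgebraicClosure (ZMod p.1)

noncomputable instance (p : Nat.Primes) : Field (FBar p) :=
  haveI : Fact p.1.Prime := ⟨p.2⟩
  inferInstanceAs (Field (AlgebraicClosure (ZMod p.1)))

open Filter Cardinal Polynomial

namespace ultraIdeal

variable {ι : Type*} {R : ι → Type*}

section CommRing

variable [∀ i, CommRing (R i)]

theorem mk_eq_mk_iff {U : Ultrafilter ι} {f g : ∀ i, R i} :
    Ideal.Quotient.mk (ultraIdeal R U) f = Ideal.Quotient.mk _ g ↔ ∀ᶠ i in U, f i = g i := by
  rw [Ideal.Quotient.mk_eq_mk_iff_sub_mem]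
  change {i | f i - g i = 0} ∈ U ↔ {i | f i = g i} ∈ U
  simp only [sub_eq_zero]

theorem charZero {U : Ultrafilter ι} (h : ∀ n : ℕ, n ≠ 0 → ∀ᶠ i in U, (n : R i) ≠ 0) :
    CharZero ((∀ i, R i) ⧸ ultraIdeal R U) := by
  refine charZero_of_inj_zero fun n hn => by_contra fun hn0 => ?_
  rw [← map_natCast (Ideal.Quotient.mk _), ← map_zero (Ideal.Quotient.mk _), mk_eq_mk_iff] at hn
  obtain ⟨i, hne, heq⟩ := ((h n hn0).and hn).exists
  exact hne heq

theorem mk_quotient_le_continuum [Countable ι] [∀ i, Countable (R i)] (U : Ultrafilter ι) :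
    #((∀ i, R i) ⧸ ultraIdeal R U) ≤ 𝔠 :=
  calc #((∀ i, R i) ⧸ ultraIdeal R U) ≤ #(∀ i, R i) :=
        mk_le_of_surjective Ideal.Quotient.mk_surjective
    _ = prod fun i => #(R i) := mk_pi R
    _ ≤ prod fun _ : ι => ℵ₀ := prod_le_prod _ _ fun i => mk_le_aleph0
    _ ≤ ℵ₀ ^ ℵ₀ := by
        rw [prod_const, lift_aleph0]
        exact power_le_power_left aleph0_ne_zero (lift_le_aleph0.mpr mk_le_aleph0)
    _ = 𝔠 := aleph0_power_aleph0

theorem continuum_le_mk_quotient [Countable ι] [∀ i, Infinite (R i)] {U : Ultrafilter ι}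
    (hU : (U : Filter ι) ≤ cofinite) : 𝔠 ≤ #((∀ i, R i) ⧸ ultraIdeal R U) := by
  obtain ⟨ν, hν⟩ := exists_injective_nat ι
  have hνU : Tendsto ν U atTop := Nat.cofinite_eq_atTop ▸ hν.tendsto_cofinite.mono_left hU
  -- `α` is recorded at coordinate `i` through its first `ν i` values, so two distinct sequences
  -- give elements that differ at all but finitely many coordinates.
  let code (α : ℕ → Bool) : ∀ i, R i := fun i =>
    Infinite.natEmbedding (R i) (Encodable.encode (List.ofFn fun k : Fin (ν i) => α k))
  have hinj : Function.Injective fun α => Ideal.Quotient.mk (ultraIdeal R U) (code α) := by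
    intro α β hαβ
    by_contra hne
    obtain ⟨m, hm⟩ := Function.ne_iff.mp hne
    obtain ⟨i, hi, hcode⟩ := ((hνU.eventually_gt_atTop m).and (mk_eq_mk_iff.mp hαβ)).exists
    have hprefix := List.ofFn_inj.mp
      (Encodable.encode_injective ((Infinite.natEmbedding _).injective hcode))
    exact hm (congrFun hprefix ⟨m, hi⟩)
  simpa using lift_mk_le_lift_mk_of_injective hinj

end CommRing

section Field

variable [∀ i, Field (R i)] (U : Ultrafilter ι)

instance isMaximal : (ultraIdeal R U).IsMaximal := by
  refine Ideal.Quotient.maximal_of_isField _ ⟨⟨0, 1, ?_⟩, mul_comm, fun {a} ha => ?_⟩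
  · rw [← map_zero (Ideal.Quotient.mk _), ← map_one (Ideal.Quotient.mk _), Ne, mk_eq_mk_iff]
    simpa using U.neBot.ne
  · obtain ⟨f, rfl⟩ := Ideal.Quotient.mk_surjective a
    refine ⟨Ideal.Quotient.mk _ f⁻¹, ?_⟩
    rw [← map_zero (Ideal.Quotient.mk _), Ne, mk_eq_mk_iff, ← Ultrafilter.eventually_not] at ha
    rw [← map_mul, ← map_one (Ideal.Quotient.mk _), mk_eq_mk_iff]
    exact ha.mono fun i hi => mul_inv_cancel₀ hi

noncomputable instance : Field ((∀ i, R i) ⧸ ultraIdeal R U) := Ideal.Quotient.field _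

instance isAlgClosed [∀ i, IsAlgClosed (R i)] : IsAlgClosed ((∀ i, R i) ⧸ ultraIdeal R U) := by
  refine IsAlgClosed.of_exists_root _ fun q hq hirr => ?_
  obtain ⟨Q, rfl, hdeg, hQ⟩ := lifts_and_degree_eq_and_monic
    ((mem_lifts q).2 (map_surjective _ Ideal.Quotient.mk_surjective q)) hq
  have hroot (i : ι) : ∃ x, (Q.map (Pi.evalRingHom R i)).IsRoot x := by
    refine IsAlgClosed.exists_root _ ?_
    rw [hQ.degree_map, hdeg]
    exact (degree_pos_of_irreducible hirr).ne'
  choose r hr using hroot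
  refine ⟨Ideal.Quotient.mk _ r, ?_⟩
  rw [eval_map_apply, ← map_zero (Ideal.Quotient.mk _), mk_eq_mk_iff]
  exact Eventually.of_forall fun i => (eval_map_apply (Pi.evalRingHom R i) r).symm.trans (hr i)

end Field

end ultraIdeal

instance (p : Nat.Primes) : IsAlgClosed (FBar p) :=
  have : Fact p.1.Prime := ⟨p.2⟩
  inferInstanceAs (IsAlgClosed (AlgebraicClosure (ZMod p.1)))

instance (p : Nat.Primes) : CharP (FBar p) p :=
  have : Fact p.1.Prime := ⟨p.2⟩
  inferInstanceAs (CharP (AlgebraicClosure (ZMod p.1)) p)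

instance (p : Nat.Primes) : Countable (FBar p) := by
  have : Fact p.1.Prime := ⟨p.2⟩
  rw [← mk_le_aleph0_iff]
  exact (Algebra.IsAlgebraic.cardinalMk_le_max (ZMod p.1) (AlgebraicClosure (ZMod p.1))).trans
    (max_le (lt_aleph0_of_finite _).le le_rfl)

theorem FBar.natCast_ne_zero {p : Nat.Primes} {n : ℕ} (hn : n ≠ 0) (hnp : n < p) :
    (n : FBar p) ≠ 0 := fun h =>
  (Nat.le_of_dvd (Nat.pos_of_ne_zero hn) ((CharP.cast_eq_zero_iff (FBar p) p n).1 h)).not_gt hnp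

theorem stmt2 (U : Ultrafilter Nat.Primes) (hU : ∀ s : Set Nat.Primes, s.Finite → s ∉ U) :
    Nonempty (ℂ ≃+* ((∀ p, FBar p) ⧸ ultraIdeal FBar U)) := by
  have hcofinite : (U : Filter Nat.Primes) ≤ cofinite := le_cofinite_iff_compl_singleton_mem.mpr
    fun p => U.compl_mem_iff_notMem.mpr (hU {p} (Set.finite_singleton p))
  have hlarge : Tendsto (fun p : Nat.Primes => (p : ℕ)) U atTop :=
    Nat.cofinite_eq_atTop ▸ Nat.Primes.coe_nat_injective.tendsto_cofinite.mono_left hcofinite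
  have : CharZero ((∀ p, FBar p) ⧸ ultraIdeal FBar U) := ultraIdeal.charZero fun n hn =>
    (hlarge.eventually_gt_atTop n).mono fun p hp => FBar.natCast_ne_zero hn hp
  have hcard : #ℂ = #((∀ p, FBar p) ⧸ ultraIdeal FBar U) := by
    rw [mk_complex]
    exact le_antisymm (ultraIdeal.continuum_le_mk_quotient hcofinite)
      (ultraIdeal.mk_quotient_le_continuum U)
  exact IsAlgClosed.ringEquiv_of_equiv_of_charZero (by rw [mk_complex]; exact aleph0_lt_continuum)
    (Cardinal.eq.mp hcard)
end

section
/- Let F be an algebraically closed field of characteristic zero whose cardinality equals 2^λ for some infinite cardinal λ. Then there exist a nonprincipal ultrafilter U on the set of prime numbers and a family (K_p)_p of fields, where each K_p is algebraically closed of characteristic p, such that F is isomorphic as a ring to the ultraproduct (∏_p K_p)/I_U. -/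
/-!
Take `K p` to be the algebraic closure of `𝔽_p(X_a : a ∈ F)`; it has cardinality `#F`. An
ultraproduct of algebraically closed fields is algebraically closed (lift a monic polynomial and
find a root in every coordinate), and over a nonprincipal ultrafilter on the primes it has
characteristic zero, since `n ≠ 0` vanishes in `K p` only for the finitely many `p ∣ n`. Its
cardinality lies between `#F` (diagonal embedding) and `#F ^ ℵ₀ = (2 ^ λ) ^ ℵ₀ = 2 ^ λ`, so it is
an uncountable algebraically closed field of characteristic zero of the same cardinality as `F`,
and Steinitz's classification gives the isomorphism.
-/

universe u

open Cardinal Filter Polynomial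

theorem IsAlgClosed.of_surjective_of_exists_root {A K : Type*} [CommRing A] [Field K]
    (f : A →+* K) (hf : Function.Surjective f)
    (h : ∀ q : A[X], q.Monic → q.natDegree ≠ 0 → ∃ x, q.IsRoot x) : IsAlgClosed K := by
  refine IsAlgClosed.of_exists_root _ fun p hp hirr => ?_
  obtain ⟨q, rfl, -, hq⟩ := lifts_and_degree_eq_and_monic (map_surjective f hf p) hp
  obtain ⟨x, hx⟩ := h q hq (by
    rw [← hq.natDegree_map f]
    exact hirr.natDegree_pos.ne')
  exact ⟨f x, by rw [eval_map, eval₂_hom, hx.eq_zero, map_zero]⟩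

theorem Pi.exists_isRoot_of_monic {ι : Type*} {R : ι → Type*} [∀ i, Field (R i)]
    [∀ i, IsAlgClosed (R i)] {q : (∀ i, R i)[X]} (hq : q.Monic) (hdeg : q.natDegree ≠ 0) :
    ∃ x, q.IsRoot x := by
  choose x hx using fun i => IsAlgClosed.exists_root (q.map (Pi.evalRingHom R i)) (by
    rw [degree_eq_natDegree (hq.map _).ne_zero, hq.natDegree_map]
    exact_mod_cast hdeg)
  exact ⟨x, funext fun i => (eval_map_apply (Pi.evalRingHom R i) x).symm.trans (hx i)⟩

section Ultraproduct

variable {ι : Type*} {R : ι → Type*}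

theorem mem_ultraIdeal [∀ i, CommRing (R i)] {U : Ultrafilter ι} {f : ∀ i, R i} :
    f ∈ ultraIdeal R U ↔ {i | f i = 0} ∈ U := Iff.rfl

theorem ultraIdeal_isMaximal [∀ i, Field (R i)] (U : Ultrafilter ι) :
    (ultraIdeal R U).IsMaximal := by
  refine Ideal.isMaximal_iff.2 ⟨fun h => by simp [mem_ultraIdeal] at h, fun J x hIJ hxI hxJ => ?_⟩
  have hinv : x⁻¹ * x - 1 ∈ ultraIdeal R U :=
    U.mem_of_superset (U.compl_mem_iff_notMem.2 hxI) fun i hi => by simp [inv_mul_cancel₀ hi]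
  simpa using J.sub_mem (J.mul_mem_left x⁻¹ hxJ) (hIJ hinv)

noncomputable instance [∀ i, Field (R i)] (U : Ultrafilter ι) :
    Field ((∀ i, R i) ⧸ ultraIdeal R U) :=
  have := ultraIdeal_isMaximal (R := R) U
  Ideal.Quotient.field _

instance [∀ i, Field (R i)] [∀ i, IsAlgClosed (R i)] (U : Ultrafilter ι) :
    IsAlgClosed ((∀ i, R i) ⧸ ultraIdeal R U) :=
  .of_surjective_of_exists_root _ Ideal.Quotient.mk_surjective fun _ =>
    Pi.exists_isRoot_of_monic (R := R)

end Ultraproduct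

theorem mk_le_mk_ultraproduct {ι α : Type u} {R : ι → Type u} [∀ i, CommRing (R i)]
    (U : Ultrafilter ι) (h : ∀ i, #α ≤ #(R i)) : #α ≤ #((∀ i, R i) ⧸ ultraIdeal R U) := by
  have e i : α ↪ R i := ((le_def _ _).1 (h i)).some
  refine mk_le_of_injective (f := fun a => Ideal.Quotient.mk _ fun i => e i a) fun a b hab => ?_
  obtain ⟨i, hi⟩ := U.nonempty_of_mem (Ideal.Quotient.eq.1 hab)
  exact (e i).injective (sub_eq_zero.1 hi)

theorem charZero_ultraproduct_of_charP (K : Nat.Primes → Type*) [∀ p, Field (K p)]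
    [∀ p : Nat.Primes, CharP (K p) p] {U : Ultrafilter Nat.Primes}
    (hU : ∀ s : Set Nat.Primes, s.Finite → s ∉ U) :
    CharZero ((∀ p, K p) ⧸ ultraIdeal K U) := by
  refine charZero_of_inj_zero fun n hn => by_contra fun hn0 => hU {p | (p : ℕ) ∣ n} ?_ ?_
  · exact ((Set.finite_le_nat n).preimage Subtype.val_injective.injOn).subset
      fun p hp => Nat.le_of_dvd (Nat.pos_of_ne_zero hn0) hp
  · rw [← map_natCast (Ideal.Quotient.mk (ultraIdeal K U)), Ideal.Quotient.eq_zero_iff_mem] at hn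
    exact U.mem_of_superset hn fun p hp => (CharP.cast_eq_zero_iff (K p) p n).1 hp

abbrev AlgClosureMvRatFunc (σ k : Type*) [Field k] : Type _ :=
  AlgebraicClosure (FractionRing (MvPolynomial σ k))

theorem mk_algClosureMvRatFunc {σ k : Type u} [Field k] (hk : #k ≤ #σ) (hσ : ℵ₀ ≤ #σ) :
    #(AlgClosureMvRatFunc σ k) = #σ := by
  have hpoly : #(MvPolynomial σ k) = #σ :=
    le_antisymm (MvPolynomial.cardinalMk_le_max.trans (max_le (max_le hk le_rfl) hσ))
      (mk_le_of_injective MvPolynomial.X_injective)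
  refine le_antisymm ?_ ?_
  · calc #(AlgClosureMvRatFunc σ k) ≤ max #(FractionRing (MvPolynomial σ k)) ℵ₀ :=
          Algebra.IsAlgebraic.cardinalMk_le_max _ _
      _ = #σ := by rw [mk_fractionRing, hpoly, max_eq_left hσ]
  · calc #σ = #(FractionRing (MvPolynomial σ k)) := by rw [mk_fractionRing, hpoly]
      _ ≤ #(AlgClosureMvRatFunc σ k) := mk_le_of_injective (algebraMap _ _).injective

local instance (p : Nat.Primes) : Fact (p : ℕ).Prime := ⟨p.2⟩

theorem stmt3 (F : Type) [Field F] [IsAlgClosed F] [CharZero F]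
    (lam : Cardinal) (hlam : Cardinal.aleph0 ≤ lam) (hF : Cardinal.mk F = 2 ^ lam) :
    ∃ (U : Ultrafilter Nat.Primes) (K : Nat.Primes → Type) (instK : ∀ p, Field (K p)),
      (∀ s : Set Nat.Primes, s.Finite → s ∉ U) ∧
      (letI := instK;
        (∀ p : Nat.Primes, IsAlgClosed (K p) ∧ CharP (K p) p.1) ∧
        Nonempty (F ≃+* ((∀ p, K p) ⧸ ultraIdeal K U))) := by
  have hF_gt : ℵ₀ < #F := hF ▸ hlam.trans_lt (cantor lam)
  let K (p : Nat.Primes) : Type := AlgClosureMvRatFunc F (ZMod p)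
  have hK p : #(K p) = #F := mk_algClosureMvRatFunc (mk_le_aleph0.trans hF_gt.le) hF_gt.le
  have hU : ∀ s : Set Nat.Primes, s.Finite → s ∉ hyperfilter Nat.Primes :=
    fun _ => notMem_hyperfilter_of_finite
  refine ⟨hyperfilter Nat.Primes, K, inferInstance, hU, fun p => ⟨inferInstance, inferInstance⟩, ?_⟩
  have := charZero_ultraproduct_of_charP K hU
  refine IsAlgClosed.ringEquiv_of_equiv_of_charZero hF_gt (Cardinal.eq.1 (le_antisymm ?_ ?_))
  · exact mk_le_mk_ultraproduct _ fun p => (hK p).ge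
  · calc #((∀ p, K p) ⧸ ultraIdeal K (hyperfilter Nat.Primes)) ≤ #(∀ p, K p) :=
          mk_le_of_surjective Ideal.Quotient.mk_surjective
      _ = #F ^ ℵ₀ := by rw [mk_pi, funext hK, prod_const', mk_eq_aleph0 Nat.Primes]
      _ = #F := by rw [hF, ← power_mul, mul_aleph0_eq hlam]
end

section
/- Let F be a field of characteristic zero. Then there exist a nonprincipal ultrafilter U on the set of prime numbers, a family (K_p)_p of fields with each K_p algebraically closed of characteristic p, and an injective ring homomorphism from F into the ultraproduct (∏_p K_p)/I_U. -/
/-!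
Take `K_p` to be an algebraic closure of `𝔽_p(X_a : a ∈ F)`. A nonzero integer polynomial stays
nonzero modulo all but finitely many primes, so along a nonprincipal ultrafilter the classes of
the variables `X_a` are algebraically independent over `ℤ` in the ultraproduct. The ultraproduct
is an algebraically closed field, since the roots of a monic lift of a polynomial can be chosen
coordinatewise. Finally `F` is algebraic over the subring generated by a transcendence basis, and
that subring maps injectively to polynomials in the `X_a`, so `F` embeds into the ultraproduct.
-/

open Filter Polynomial

section Pi

variable {ι : Type*} {R : ι → Type*}

theorem Polynomial.eval_pi_apply [∀ i, CommSemiring (R i)] {Q : (∀ i, R i)[X]} (r : ∀ i, R i)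
    (i : ι) :
    Q.eval r i = (Q.map (Pi.evalRingHom R i)).eval (r i) := by
  rw [eval_map]
  exact (eval₂_at_apply (Pi.evalRingHom R i) r).symm

variable [∀ i, Field (R i)] [∀ i, IsAlgClosed (R i)]

theorem Polynomial.Monic.exists_eval_eq_zero_pi {Q : (∀ i, R i)[X]}
    (hQ : Q.Monic) (hdeg : Q.natDegree ≠ 0) : ∃ r, Q.eval r = 0 := by
  have hroot (i : ι) : ∃ x, (Q.map (Pi.evalRingHom R i)).IsRoot x := by
    exact IsAlgClosed.exists_root _ <| degree_ne_of_natDegree_ne (by rwa [hQ.natDegree_map])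
  choose r hr using hroot
  refine ⟨r, ?_⟩
  ext i
  exact (eval_pi_apply r i).trans (hr i)

theorem IsAlgClosed.of_surjective_pi {K : Type*} [Field K]
    (f : (∀ i, R i) →+* K) (hf : Function.Surjective f) : IsAlgClosed K := by
  refine IsAlgClosed.of_exists_root K fun q hq hirr => ?_
  obtain ⟨Q, rfl, hdeg, hQ⟩ := lifts_and_natDegree_eq_and_monic (map_surjective f hf q) hq
  obtain ⟨r, hr⟩ := hQ.exists_eval_eq_zero_pi (hdeg ▸ hirr.natDegree_pos.ne')
  exact ⟨f r, by rw [eval_map, eval₂_at_apply, hr, map_zero]⟩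

end Pi

namespace ultraIdeal

section CommRing

variable {ι : Type*} {R : ι → Type*} [∀ i, CommRing (R i)] {U : Ultrafilter ι}

theorem mk_eq_zero_iff (f : ∀ i, R i) :
    Ideal.Quotient.mk (ultraIdeal R U) f = 0 ↔ {i | f i = 0} ∈ U :=
  Ideal.Quotient.eq_zero_iff_mem

theorem injective_mk_comp_piRingHom {A : Type*} [Ring A] {χ : ∀ i, A →+* R i}
    (hχ : ∀ a ≠ 0, ∀ᶠ i in U, χ i a ≠ 0) :
    Function.Injective ((Ideal.Quotient.mk (ultraIdeal R U)).comp (RingHom.pi χ)) := by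
  refine (injective_iff_map_eq_zero _).2 fun a ha => by_contra fun ha0 => ?_
  rw [RingHom.comp_apply, mk_eq_zero_iff] at ha
  obtain ⟨i, hi, hi0⟩ := ((hχ a ha0).and ha).exists
  exact hi hi0

end CommRing

variable {ι : Type*} (R : ι → Type*) [∀ i, Field (R i)] (U : Ultrafilter ι)

theorem isField : IsField ((∀ i, R i) ⧸ ultraIdeal R U) := by
  refine ⟨⟨0, 1, fun h => ?_⟩, mul_comm, fun {a} ha => ?_⟩
  · have h1 : Ideal.Quotient.mk (ultraIdeal R U) 1 = 0 := by rw [map_one, ← h]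
    rw [mk_eq_zero_iff] at h1
    simp at h1
  · obtain ⟨f, rfl⟩ := Ideal.Quotient.mk_surjective a
    rw [Ne, mk_eq_zero_iff, ← Ultrafilter.compl_mem_iff_notMem] at ha
    refine ⟨Ideal.Quotient.mk _ fun i => (f i)⁻¹, ?_⟩
    rw [← map_mul, ← map_one (Ideal.Quotient.mk _), Ideal.Quotient.eq]
    refine mem_of_superset ha fun i hi => ?_
    simp [mul_inv_cancel₀ hi]

noncomputable instance inst_s4 : Field ((∀ i, R i) ⧸ ultraIdeal R U) := (isField R U).toField

instance [∀ i, IsAlgClosed (R i)] : IsAlgClosed ((∀ i, R i) ⧸ ultraIdeal R U) :=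
  .of_surjective_pi _ Ideal.Quotient.mk_surjective

end ultraIdeal

theorem Nat.Primes.finite_setOf_dvd {c : ℤ} (hc : c ≠ 0) :
    {p : Nat.Primes | (p : ℤ) ∣ c}.Finite := by
  refine ((Set.finite_Iic c.natAbs).preimage Nat.Primes.coe_nat_injective.injOn).subset ?_
  intro p hp
  exact Nat.le_of_dvd (Int.natAbs_pos.2 hc) (Int.ofNat_dvd_left.1 hp)

instance inst_s4 (p : Nat.Primes) : Fact (p : ℕ).Prime := ⟨p.2⟩

theorem MvPolynomial.eventually_map_zmod_ne_zero {σ : Type*} {Q : MvPolynomial σ ℤ}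
    (hQ : Q ≠ 0) :
    ∀ᶠ p : Nat.Primes in cofinite, Q.map (Int.castRingHom (ZMod p)) ≠ 0 := by
  obtain ⟨m, hm⟩ := ne_zero_iff.1 hQ
  refine eventually_cofinite.2 ((Nat.Primes.finite_setOf_dvd hm).subset fun p hp => ?_)
  have hcoeff := congr_arg (coeff m) (not_not.1 hp)
  rwa [coeff_map, coeff_zero, eq_intCast, ZMod.intCast_zmod_eq_zero_iff_dvd] at hcoeff

theorem nonempty_ringHom_of_injective_mvPolynomial {F L : Type*} [Field F] [CharZero F] [Field L]
    [IsAlgClosed L] {φ : MvPolynomial F ℤ →+* L} (hφ : Function.Injective φ) :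
    Nonempty (F →+* L) := by
  obtain ⟨s, hs⟩ := exists_isTranscendenceBasis ℤ F
  let A := Algebra.adjoin ℤ (Set.range ((↑) : s → F))
  have : Algebra.IsAlgebraic A F := hs.isAlgebraic
  let ψ : A →+* L := (φ.comp (MvPolynomial.rename ((↑) : s → F)).toRingHom).comp
    hs.1.aevalEquiv.symm.toRingEquiv.toRingHom
  let := ψ.toAlgebra
  have : Module.IsTorsionFree A L := Module.isTorsionFree_iff_algebraMap_injective.2 <|
    (hφ.comp (MvPolynomial.rename_injective _ Subtype.val_injective)).comp
      hs.1.aevalEquiv.symm.injective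
  have : Module.IsTorsionFree A F :=
    Module.isTorsionFree_iff_algebraMap_injective.2 Subtype.val_injective
  exact ⟨(IsAlgClosed.lift : F →ₐ[A] L).toRingHom⟩

theorem AlgebraicClosure.algebraMap_fractionRing_injective (A : Type*) [CommRing A] [IsDomain A] :
    Function.Injective (algebraMap A (AlgebraicClosure (FractionRing A))) := by
  rw [IsScalarTower.algebraMap_eq _ (FractionRing A)]
  exact (algebraMap (FractionRing A) (AlgebraicClosure (FractionRing A))).injective.comp
    (IsFractionRing.injective _ _)

section Reduction

variable (F : Type*) (p : Nat.Primes)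

abbrev ModPClosure : Type _ := AlgebraicClosure (FractionRing (MvPolynomial F (ZMod p)))

noncomputable def reduceMod : MvPolynomial F ℤ →+* ModPClosure F p :=
  (algebraMap (MvPolynomial F (ZMod p)) (ModPClosure F p)).comp
    (MvPolynomial.map (Int.castRingHom (ZMod p)))

end Reduction

theorem stmt4 (F : Type) [Field F] [CharZero F] :
    ∃ (U : Ultrafilter Nat.Primes) (K : Nat.Primes → Type) (instK : ∀ p, Field (K p)),
      (∀ s : Set Nat.Primes, s.Finite → s ∉ U) ∧
      (letI := instK;
        (∀ p : Nat.Primes, IsAlgClosed (K p) ∧ CharP (K p) p.1) ∧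
        ∃ η : F →+* ((∀ p, K p) ⧸ ultraIdeal K U), Function.Injective η) := by
  refine ⟨hyperfilter Nat.Primes, ModPClosure F, inferInstance,
    fun s hs => notMem_hyperfilter_of_finite hs, fun p => ⟨inferInstance, inferInstance⟩, ?_⟩
  have hreduce : ∀ Q ≠ 0, ∀ᶠ p in hyperfilter Nat.Primes, reduceMod F p Q ≠ 0 := by
    intro Q hQ
    refine ((MvPolynomial.eventually_map_zmod_ne_zero hQ).filter_mono
      hyperfilter_le_cofinite).mono fun p hp => ?_
    exact (map_ne_zero_iff _ (AlgebraicClosure.algebraMap_fractionRing_injective _)).2 hp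
  obtain ⟨η⟩ := nonempty_ringHom_of_injective_mvPolynomial
    (ultraIdeal.injective_mk_comp_piRingHom hreduce)
  exact ⟨η, η.injective⟩
end

section
/- Let S be a Noetherian commutative ring and let A and B be commutative S-algebras. The following are equivalent: (1) for every n and every finite family of polynomials p_1, …, p_s in the multivariate polynomial ring S[X_1, …, X_n], if there is a tuple a ∈ A^n with p_k(a) = 0 for all k, then there is a tuple b ∈ B^n with p_k(b) = 0 for all k; (2) for every finitely generated S-subalgebra V of A there exists an S-algebra homomorphism V → B; (3) there exist an infinite set ι, a nonprincipal ultrafilter U on ι, and a ring homomorphism η : A → (∏_{i∈ι} B)/I_U such that η(algebraMap S A s) equals the class of the constant sequence with value algebraMap S B s, for every s ∈ S. -/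
theorem stmt6 (S A B : Type) [CommRing S] [IsNoetherianRing S]
    [CommRing A] [CommRing B] [Algebra S A] [Algebra S B] :
    List.TFAE
      [ ∀ (n s : ℕ) (p : Fin s → MvPolynomial (Fin n) S),
          (∃ a : Fin n → A, ∀ k, MvPolynomial.aeval a (p k) = 0) →
          (∃ b : Fin n → B, ∀ k, MvPolynomial.aeval b (p k) = 0),
        ∀ V : Subalgebra S A, V.FG → Nonempty (V →ₐ[S] B),
        ∃ (ι : Type) (U : Ultrafilter ι), Infinite ι ∧
          (∀ s : Set ι, s.Finite → s ∉ U) ∧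
          ∃ η : A →+* ((∀ _ : ι, B) ⧸ ultraIdeal (fun _ : ι => B) U),
            ∀ s : S, η (algebraMap S A s) =
              Ideal.Quotient.mk (ultraIdeal (fun _ : ι => B) U)
                (fun _ => algebraMap S B s) ] := by
  tfae_have 1 → 2
  · intro h1
    classical
    intro V hV
    obtain ⟨t, ht⟩ := hV
    set n := t.card with hn
    let a : Fin n → A := fun j => (t.equivFin.symm j : A)
    have hrange : Set.range a = (↑t : Set A) := by
      ext x
      constructor
      · rintro ⟨j, rfl⟩; exact (t.equivFin.symm j).2
      · intro hx; exact ⟨t.equivFin ⟨x, hx⟩, by simp [a]⟩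
    have hrangeV : (MvPolynomial.aeval (R := S) a).range = V := by
      rw [← Algebra.adjoin_range_eq_range_aeval, hrange, ht]
    have hmem : ∀ q : MvPolynomial (Fin n) S, MvPolynomial.aeval a q ∈ V := by
      intro q
      rw [← hrangeV]
      exact ⟨q, rfl⟩
    let f : MvPolynomial (Fin n) S →ₐ[S] V := (MvPolynomial.aeval a).codRestrict V hmem
    have hfval : ∀ q, (f q : A) = MvPolynomial.aeval a q := fun q => rfl
    have hsurj : Function.Surjective f := by
      rintro ⟨v, hv⟩
      rw [← hrangeV] at hv
      obtain ⟨q, hq⟩ := hv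
      exact ⟨q, Subtype.ext hq⟩
    -- ker f is finitely generated
    obtain ⟨T, hT⟩ := (isNoetherianRing_iff_ideal_fg (MvPolynomial (Fin n) S)).1
      inferInstance (RingHom.ker f)
    set s := T.card with hs
    let p : Fin s → MvPolynomial (Fin n) S := fun k => (T.equivFin.symm k : _)
    have hprange : Set.range p = (↑T : Set (MvPolynomial (Fin n) S)) := by
      ext x
      constructor
      · rintro ⟨j, rfl⟩; exact (T.equivFin.symm j).2
      · intro hx; exact ⟨T.equivFin ⟨x, hx⟩, by simp [p]⟩
    have hspan : Ideal.span (Set.range p) = RingHom.ker f := by rw [hprange, hT]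
    have hker : ∀ k, p k ∈ RingHom.ker f := by
      intro k
      rw [← hspan]
      exact Ideal.subset_span ⟨k, rfl⟩
    -- apply hypothesis 1
    obtain ⟨b, hb⟩ := h1 n s p ⟨a, fun k => by
      rw [← hfval]
      have : f (p k) = 0 := hker k
      rw [this]; rfl⟩
    -- build the algebra hom
    have h0 : ∀ q ∈ RingHom.ker f, MvPolynomial.aeval (R := S) b q = 0 := by
      intro q hq
      rw [← hspan] at hq
      have hle : Ideal.span (Set.range p) ≤ RingHom.ker (MvPolynomial.aeval (R := S) b) :=
        Ideal.span_le.2 (by rintro _ ⟨k, rfl⟩; exact hb k)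
      exact hle hq
    exact ⟨(Ideal.Quotient.liftₐ (RingHom.ker f) (MvPolynomial.aeval b) h0).comp
      (Ideal.quotientKerAlgEquivOfSurjective hsurj).symm.toAlgHom⟩
  tfae_have 2 → 3
  · intro h2
    classical
    set ι := Finset A × ℕ with hι
    let Sa : A → Set ι := fun a => {i | a ∈ i.1}
    let 𝒮 : Set (Set ι) := Set.range Sa ∪ {s | sᶜ.Finite}
    -- the generated filter is proper
    have hne : (Filter.generate 𝒮).NeBot := by
      rw [Filter.generate_neBot_iff]
      intro t ht htfin
      by_cases hte : t.Nonempty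
      swap
      · rw [Set.not_nonempty_iff_eq_empty] at hte
        subst hte
        exact ⟨(∅, 0), by simp⟩
      -- split into Sa-sets and cofinite sets
      let t1 : Set (Set ι) := {s ∈ t | s ∈ Set.range Sa}
      have ht1fin : t1.Finite := htfin.subset (Set.sep_subset _ _)
      have hwit : ∀ s ∈ t1, ∃ a : A, Sa a = s := fun s hs => hs.2
      choose w hw using hwit
      -- finset of witnesses
      let F : Finset A := (ht1fin.toFinset.attach.image
        (fun s => w s.1 (ht1fin.mem_toFinset.1 s.2)))
      let L : Set ι := Set.range (fun n : ℕ => ((F, n) : ι))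
      have hLinf : L.Infinite := Set.infinite_range_of_injective (fun n m hnm =>
        congrArg Prod.snd hnm)
      have hL1 : ∀ s ∈ t1, L ⊆ s := by
        rintro s hs _ ⟨n, rfl⟩
        rw [← hw s hs]
        show w s hs ∈ F
        exact Finset.mem_image.2 ⟨⟨s, ht1fin.mem_toFinset.2 hs⟩, Finset.mem_attach _ _, rfl⟩
      have hfin2 : (⋃ s ∈ (t \ t1), sᶜ).Finite := by
        refine Set.Finite.biUnion (htfin.subset Set.diff_subset) ?_
        rintro s ⟨hst, hs1⟩
        rcases ht hst with h | h
        · exact absurd ⟨hst, h⟩ hs1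
        · exact h
      have : (L \ ⋃ s ∈ (t \ t1), sᶜ).Infinite := hLinf.diff hfin2
      obtain ⟨i, hiL, hiU⟩ := this.nonempty
      refine ⟨i, ?_⟩
      rw [Set.mem_sInter]
      intro s hs
      by_cases h1 : s ∈ t1
      · exact hL1 s h1 hiL
      · by_contra hns
        exact hiU (Set.mem_biUnion ⟨hs, h1⟩ hns)
    letI := hne
    let U : Ultrafilter ι := Ultrafilter.of (Filter.generate 𝒮)
    have hU : ∀ s ∈ 𝒮, s ∈ U := fun s hs =>
      Ultrafilter.of_le (Filter.generate 𝒮) (Filter.mem_generate_of_mem hs)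
    have hSa : ∀ a : A, Sa a ∈ U := fun a => hU _ (Or.inl ⟨a, rfl⟩)
    have hnp : ∀ s : Set ι, s.Finite → s ∉ U := by
      intro s hs hmem
      have : sᶜ ∈ U := hU _ (Or.inr (by simpa using hs))
      exact (Ultrafilter.compl_mem_iff_notMem.1 this) hmem
    -- the subalgebras and maps
    let V : ι → Subalgebra S A := fun i => Algebra.adjoin S (↑i.1 : Set A)
    let φ : ∀ i, V i →ₐ[S] B := fun i => (h2 (V i) (Subalgebra.fg_adjoin_finset i.1)).some
    let g : A → ∀ _ : ι, B := fun a i => if h : a ∈ V i then φ i ⟨a, h⟩ else 0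
    have hmemV : ∀ (a : A) (i : ι), i ∈ Sa a → a ∈ V i := fun a i hi =>
      Algebra.subset_adjoin hi
    set I := ultraIdeal (fun _ : ι => B) U with hIdef
    have hsub : ∀ (x y : ∀ _ : ι, B), {i | x i = y i} ∈ U →
        Ideal.Quotient.mk I x = Ideal.Quotient.mk I y := by
      intro x y hxy
      rw [Ideal.Quotient.mk_eq_mk_iff_sub_mem]
      refine U.toFilter.mem_of_superset hxy ?_
      intro i hi
      show (x - y) i = 0
      rw [Pi.sub_apply, sub_eq_zero]
      exact hi
    refine ⟨ι, U, inferInstance, hnp, ?_⟩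
    refine ⟨{ toFun := fun a => Ideal.Quotient.mk I (g a), map_one' := ?_, map_mul' := ?_,
              map_zero' := ?_, map_add' := ?_ }, ?_⟩
    · show Ideal.Quotient.mk I (g 1) = Ideal.Quotient.mk I 1
      congr 1
      funext i
      show (if h : (1:A) ∈ V i then φ i ⟨1, h⟩ else 0) = 1
      rw [dif_pos (one_mem (V i))]
      exact map_one (φ i)
    · intro a b
      show Ideal.Quotient.mk I (g (a*b)) = Ideal.Quotient.mk I (g a) * Ideal.Quotient.mk I (g b)
      rw [← map_mul]
      refine hsub _ _ (U.toFilter.mem_of_superset (Filter.inter_mem (hSa a) (hSa b)) ?_)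
      rintro i ⟨hia, hib⟩
      have ha := hmemV a i hia
      have hb := hmemV b i hib
      show (if h : a*b ∈ V i then φ i ⟨a*b, h⟩ else 0) = g a i * g b i
      rw [dif_pos (mul_mem ha hb)]
      show φ i (⟨a, ha⟩ * ⟨b, hb⟩) = g a i * g b i
      rw [map_mul]
      show _ = (if h : a ∈ V i then φ i ⟨a, h⟩ else 0) * (if h : b ∈ V i then φ i ⟨b, h⟩ else 0)
      rw [dif_pos ha, dif_pos hb]
    · show Ideal.Quotient.mk I (g 0) = Ideal.Quotient.mk I 0
      congr 1
      funext i
      show (if h : (0:A) ∈ V i then φ i ⟨0, h⟩ else 0) = 0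
      rw [dif_pos (zero_mem (V i))]
      exact map_zero (φ i)
    · intro a b
      show Ideal.Quotient.mk I (g (a+b)) = Ideal.Quotient.mk I (g a) + Ideal.Quotient.mk I (g b)
      rw [← map_add]
      refine hsub _ _ (U.toFilter.mem_of_superset (Filter.inter_mem (hSa a) (hSa b)) ?_)
      rintro i ⟨hia, hib⟩
      have ha := hmemV a i hia
      have hb := hmemV b i hib
      show (if h : a+b ∈ V i then φ i ⟨a+b, h⟩ else 0) = g a i + g b i
      rw [dif_pos (add_mem ha hb)]
      show φ i (⟨a, ha⟩ + ⟨b, hb⟩) = g a i + g b i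
      rw [map_add]
      show _ = (if h : a ∈ V i then φ i ⟨a, h⟩ else 0) + (if h : b ∈ V i then φ i ⟨b, h⟩ else 0)
      rw [dif_pos ha, dif_pos hb]
    · intro s
      show Ideal.Quotient.mk I (g (algebraMap S A s)) = _
      congr 1
      funext i
      show (if h : algebraMap S A s ∈ V i then φ i ⟨algebraMap S A s, h⟩ else 0)
        = algebraMap S B s
      rw [dif_pos (algebraMap_mem (V i) s)]
      exact (φ i).commutes s
  tfae_have 3 → 1
  · intro h
    obtain ⟨ι, U, hinf, -, η, hη⟩ := h
    intro n s p ⟨a, ha⟩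
    have hcomm : ∀ t : S, η (algebraMap S A t) =
        algebraMap S ((∀ _ : ι, B) ⧸ ultraIdeal (fun _ : ι => B) U) t := by
      intro t
      rw [hη t, ← (Ideal.Quotient.mkₐ S (ultraIdeal (fun _ : ι => B) U)).commutes t]
      rfl
    let ηₐ : A →ₐ[S] ((∀ _ : ι, B) ⧸ ultraIdeal (fun _ : ι => B) U) :=
      { η with commutes' := hcomm }
    choose f hf using fun j =>
      Ideal.Quotient.mk_surjective (I := ultraIdeal (fun _ : ι => B) U) (ηₐ (a j))
    have hmem : ∀ k, {i | MvPolynomial.aeval (fun j => f j i) (p k) = 0} ∈ U := by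
      intro k
      have h1 : MvPolynomial.aeval (fun j => ηₐ (a j)) (p k) = 0 := by
        rw [← MvPolynomial.comp_aeval_apply a ηₐ (p k), ha k, map_zero]
      have h2 : (Ideal.Quotient.mkₐ S (ultraIdeal (fun _ : ι => B) U))
          (MvPolynomial.aeval f (p k)) = 0 := by
        rw [MvPolynomial.comp_aeval_apply]
        have heq : (fun j => (Ideal.Quotient.mkₐ S (ultraIdeal (fun _ : ι => B) U)) (f j))
            = fun j => ηₐ (a j) := by
          funext j; exact hf j
        rw [heq]; exact h1
      have h3 : MvPolynomial.aeval f (p k) ∈ ultraIdeal (fun _ : ι => B) U := by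
        rwa [← Ideal.Quotient.eq_zero_iff_mem]
      refine U.toFilter.mem_of_superset h3 ?_
      intro i hi
      have h4 : (Pi.evalAlgHom S (fun _ : ι => B) i) (MvPolynomial.aeval f (p k)) = 0 := by
        simpa using hi
      rwa [MvPolynomial.comp_aeval_apply] at h4
    have hint : (⋂ k : Fin s, {i | MvPolynomial.aeval (fun j => f j i) (p k) = 0}) ∈ U :=
      (Filter.iInter_mem).2 hmem
    obtain ⟨i, hi⟩ := Filter.nonempty_of_mem hint
    exact ⟨fun j => f j i, fun k => by simpa using Set.mem_iInter.1 hi k⟩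
  tfae_finish
end

section
/- Let ι be an infinite set, U a nonprincipal ultrafilter on ι, (K_i)_{i∈ι} a family of fields, and n ∈ ℕ. Let P := ∏_i K_i and Q := ∏_i K_i[[X_1, …, X_n]] (products of fields and of multivariate formal power series rings), and let I_U ⊆ P and J_U ⊆ Q be the ideals of families f with {i : f i = 0} ∈ U; write [·] for residue classes. Then there exists a surjective ring homomorphism π : Q/J_U → (P/I_U)[[X_1, …, X_n]] such that: (a) π([(C(a_i))_i]) = C([a]) for every a = (a_i)_i ∈ P, where C denotes the constant power series map; (b) π([(X_j)_i]) = X_j for each j; and (c) the kernel of π equals the intersection ⋂_{d∈ℕ} 𝔛^d, where 𝔛 is the ideal of Q/J_U generated by the classes of the constant families X_1, …, X_n. -/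
namespace MvPowerSeries

section Order

open Finsupp

variable {σ R : Type*} [CommSemiring R]

theorem le_order_of_mem_pow_span_X {F : MvPowerSeries σ R} {d : ℕ}
    (hF : F ∈ Ideal.span (Set.range (X : σ → MvPowerSeries σ R)) ^ d) :
    (d : ℕ∞) ≤ F.order := by
  induction d generalizing F with
  | zero => simp
  | succ d ih =>
    rw [pow_succ] at hF
    refine Submodule.mul_induction_on hF (fun a ha b hb => ?_) (fun a b ha hb => ?_)
    · have hb : 1 ≤ b.order := by
        rw [one_le_order_iff_constCoeff_eq_zero, ← RingHom.mem_ker]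
        refine (Ideal.span_le.mpr ?_) hb
        rintro _ ⟨j, rfl⟩
        exact constantCoeff_X j
      calc ((d + 1 : ℕ) : ℕ∞) = d + 1 := Nat.cast_succ d
        _ ≤ a.order + b.order := add_le_add (ih ha) hb
        _ ≤ (a * b).order := le_order_mul
    · exact (le_min ha hb).trans min_order_le_add

theorem monomial_one_mem_pow_span_X (s : σ →₀ ℕ) :
    monomial s (1 : R) ∈ Ideal.span (Set.range (X : σ → MvPowerSeries σ R)) ^ s.degree := by
  induction s using Finsupp.induction with
  | zero => simp
  | single_add j k t _ _ ih =>
    rw [← one_mul (1 : R), ← monomial_mul_monomial, ← X_pow_eq, map_add, degree_single,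
      pow_add]
    exact Ideal.mul_mem_mul (Ideal.pow_mem_pow (Ideal.subset_span (Set.mem_range_self j)) k) ih

theorem exists_eq_sum_monomial_mul_of_le_order [Finite σ] {F : MvPowerSeries σ R} {d : ℕ}
    (hF : (d : ℕ∞) ≤ F.order) : ∃ H : (σ →₀ ℕ) → MvPowerSeries σ R,
      F = ∑ s ∈ (finite_of_degree_eq (σ := σ) d).toFinset, monomial s 1 * H s := by
  classical
  -- assign to every exponent of degree `≥ d` a sub-exponent `sel e` of degree `d`;
  -- `H s` collects the terms of `F` with `sel e = s`, divided by `X ^ s`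
  have : ∀ e : σ →₀ ℕ, ∃ s, d ≤ e.degree → s ≤ e ∧ s.degree = d := fun e => by
    by_cases h : d ≤ e.degree
    · obtain ⟨s, hs⟩ := exists_le_degree_eq e d h
      exact ⟨s, fun _ => hs⟩
    · exact ⟨0, fun h' => absurd h' h⟩
  choose sel hsel using this
  let H : (σ →₀ ℕ) → MvPowerSeries σ R := fun s t =>
    if sel (t + s) = s then coeff (t + s) F else 0
  refine ⟨H, ?_⟩
  ext e
  have hH (s : σ →₀ ℕ) (hs : s ≤ e) :
      coeff (e - s) (H s) = if sel e = s then coeff e F else 0 := by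
    show (if sel (e - s + s) = s then coeff (e - s + s) F else 0) = _
    rw [tsub_add_cancel_of_le hs]
  simp only [map_sum, coeff_monomial_mul, one_mul]
  by_cases he : d ≤ e.degree
  · rw [Finset.sum_eq_single (sel e) (fun s _ hs => ?_) (fun h => ?_),
      if_pos (hsel e he).1, hH _ (hsel e he).1, if_pos rfl]
    · split_ifs with hle
      · rw [hH s hle, if_neg (Ne.symm hs)]
      · rfl
    · exact absurd (by simpa using (hsel e he).2) h
  · rw [coeff_of_lt_order (lt_of_lt_of_le (by exact_mod_cast not_le.mp he) hF)]
    refine (Finset.sum_eq_zero fun s hs => if_neg fun hle => he ?_).symm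
    have hs : s.degree = d := by simpa using hs
    exact hs ▸ degree_mono hle

theorem mem_pow_span_X_of_le_order [Finite σ] {F : MvPowerSeries σ R} {d : ℕ}
    (hF : (d : ℕ∞) ≤ F.order) :
    F ∈ Ideal.span (Set.range (X : σ → MvPowerSeries σ R)) ^ d := by
  obtain ⟨H, rfl⟩ := exists_eq_sum_monomial_mul_of_le_order hF
  refine Ideal.sum_mem _ fun s hs => Ideal.mul_mem_right _ _ ?_
  have hs : s.degree = d := by simpa using hs
  exact hs ▸ monomial_one_mem_pow_span_X s

theorem iInf_pow_span_X_eq_bot :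
    ⨅ d : ℕ, Ideal.span (Set.range (X : σ → MvPowerSeries σ R)) ^ d = ⊥ := by
  refine eq_bot_iff.mpr fun F hF => ?_
  rw [Submodule.mem_iInf] at hF
  rw [Ideal.mem_bot, ← order_eq_top_iff]
  exact ENat.eq_top_iff_forall_ge.mpr fun d => le_order_of_mem_pow_span_X (hF d)

end Order

theorem map_surjective {σ R S : Type*} [CommSemiring R] [CommSemiring S] {f : R →+* S}
    (hf : Function.Surjective f) : Function.Surjective (map (σ := σ) f) := by
  intro G
  choose g hg using fun e => hf (coeff e G)
  exact ⟨g, ext fun e => hg e⟩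

section Pi

variable (σ : Type*) {ι : Type*} (R : ι → Type*) [∀ i, CommSemiring (R i)]

noncomputable def piRingEquiv : MvPowerSeries σ (∀ i, R i) ≃+* ∀ i, MvPowerSeries σ (R i) :=
  { RingHom.pi fun i => map (Pi.evalRingHom R i) with
    invFun := fun f e i => coeff e (f i)
    left_inv := fun _ => rfl
    right_inv := fun _ => rfl }

variable {σ R}

@[simp]
theorem coeff_piRingEquiv_symm (f : ∀ i, MvPowerSeries σ (R i)) (e : σ →₀ ℕ) :
    coeff e ((piRingEquiv σ R).symm f) = fun i => coeff e (f i) := rfl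

theorem piRingEquiv_X (j : σ) : piRingEquiv σ R (X j) = fun _ => X j := by
  funext i
  exact map_X (Pi.evalRingHom R i) j

theorem piRingEquiv_C (a : ∀ i, R i) : piRingEquiv σ R (C a) = fun i => C (a i) := by
  funext i
  exact map_C (Pi.evalRingHom R i) a

theorem mem_pow_span_piX_of_le_order [Finite σ] {f : ∀ i, MvPowerSeries σ (R i)} {d : ℕ}
    (hf : ∀ i, (d : ℕ∞) ≤ (f i).order) :
    f ∈ Ideal.span (Set.range fun j : σ => fun i => (X j : MvPowerSeries σ (R i))) ^ d := by
  have hsymm : (piRingEquiv σ R).symm f ∈ Ideal.span (Set.range X) ^ d :=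
    mem_pow_span_X_of_le_order <| le_order fun e he => funext fun i =>
      coeff_of_lt_order (he.trans_le (hf i))
  simpa [Ideal.map_pow, Ideal.map_span, ← Set.range_comp, Function.comp_def, piRingEquiv_X]
    using Ideal.mem_map_of_mem (piRingEquiv σ R) hsymm

end Pi

end MvPowerSeries

section Ultraproduct

open MvPowerSeries

variable {ι σ : Type*} (R : ι → Type*) [∀ i, CommRing (R i)] (U : Ultrafilter ι)

theorem mk_ultraIdeal_eq_mk_iff {f g : ∀ i, R i} :
    Ideal.Quotient.mk (ultraIdeal R U) f = Ideal.Quotient.mk _ g ↔ ∀ᶠ i in U, f i = g i := by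
  rw [Ideal.Quotient.eq]
  show {i | f i - g i = 0} ∈ U ↔ _
  simp only [sub_eq_zero]
  rfl

noncomputable def ultraCoeffHom :
    (∀ i, MvPowerSeries σ (R i)) ⧸ ultraIdeal (fun i => MvPowerSeries σ (R i)) U →+*
      MvPowerSeries σ ((∀ i, R i) ⧸ ultraIdeal R U) :=
  Ideal.Quotient.lift _ ((map (Ideal.Quotient.mk _)).comp (piRingEquiv σ R).symm.toRingHom)
    fun f hf => ext fun e => Ideal.Quotient.eq_zero_iff_mem.mpr <|
      U.mem_of_superset hf fun i (hi : f i = 0) => by simp [hi]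

theorem coeff_ultraCoeffHom_mk (f : ∀ i, MvPowerSeries σ (R i)) (e : σ →₀ ℕ) :
    coeff e (ultraCoeffHom R U (Ideal.Quotient.mk _ f)) =
      Ideal.Quotient.mk _ fun i => coeff e (f i) := rfl

theorem ultraCoeffHom_surjective : Function.Surjective (ultraCoeffHom (σ := σ) R U) :=
  Ideal.Quotient.lift_surjective_of_surjective _ _ <|
    (map_surjective (Ideal.Quotient.mk_surjective (I := ultraIdeal R U))).comp
      (piRingEquiv σ R).symm.surjective

theorem ultraCoeffHom_mk_piRingEquiv (F : MvPowerSeries σ (∀ i, R i)) :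
    ultraCoeffHom R U (Ideal.Quotient.mk _ (piRingEquiv σ R F)) =
      map (Ideal.Quotient.mk _) F := rfl

theorem ultraCoeffHom_mk_C (a : ∀ i, R i) :
    ultraCoeffHom (σ := σ) R U (Ideal.Quotient.mk _ fun i => C (a i)) =
      C (Ideal.Quotient.mk _ a) := by
  rw [← piRingEquiv_C, ultraCoeffHom_mk_piRingEquiv, map_C]

theorem ultraCoeffHom_mk_X (j : σ) :
    ultraCoeffHom R U (Ideal.Quotient.mk _ fun i => (X j : MvPowerSeries σ (R i))) = X j := by
  rw [← piRingEquiv_X, ultraCoeffHom_mk_piRingEquiv, map_X]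

theorem map_ultraCoeffHom_span_X :
    Ideal.map (ultraCoeffHom R U) (Ideal.span (Set.range fun j : σ =>
      Ideal.Quotient.mk (ultraIdeal (fun i => MvPowerSeries σ (R i)) U)
        fun i => (X j : MvPowerSeries σ (R i)))) = Ideal.span (Set.range X) := by
  rw [Ideal.map_span, ← Set.range_comp]
  exact congrArg (Ideal.span ∘ Set.range) (funext (ultraCoeffHom_mk_X R U))

theorem eventually_le_order_of_mem_ker [Finite σ] {f : ∀ i, MvPowerSeries σ (R i)}
    (hf : Ideal.Quotient.mk _ f ∈ RingHom.ker (ultraCoeffHom R U)) (d : ℕ) :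
    ∀ᶠ i in U, (d : ℕ∞) ≤ (f i).order := by
  have hcoeff (e : σ →₀ ℕ) : ∀ᶠ i in U, coeff e (f i) = 0 := by
    rw [← mk_ultraIdeal_eq_mk_iff, ← coeff_ultraCoeffHom_mk, RingHom.mem_ker.mp hf]
    rfl
  refine U.mem_of_superset ((Filter.biInter_mem (Finsupp.finite_of_degree_lt d)).mpr
    fun e _ => hcoeff e) fun i hi => le_order fun e he => ?_
  exact Set.mem_iInter₂.mp hi e (by exact_mod_cast he)

theorem mk_mem_pow_span_X_of_eventually_le_order [Finite σ] {f : ∀ i, MvPowerSeries σ (R i)}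
    {d : ℕ} (hf : ∀ᶠ i in U, (d : ℕ∞) ≤ (f i).order) :
    Ideal.Quotient.mk (ultraIdeal (fun i => MvPowerSeries σ (R i)) U) f ∈
      Ideal.span (Set.range fun j : σ =>
        Ideal.Quotient.mk (ultraIdeal (fun i => MvPowerSeries σ (R i)) U)
          fun i => (X j : MvPowerSeries σ (R i))) ^ d := by
  classical
  let g := fun i => if (d : ℕ∞) ≤ (f i).order then f i else 0
  have hfg : Ideal.Quotient.mk _ f = Ideal.Quotient.mk _ g :=
    (mk_ultraIdeal_eq_mk_iff _ U).mpr (hf.mono fun i hi => by simp [g, hi])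
  have hg :
      g ∈ Ideal.span (Set.range fun j : σ => fun i => (X j : MvPowerSeries σ (R i))) ^ d :=
    mem_pow_span_piX_of_le_order fun i => by
      by_cases hi : (d : ℕ∞) ≤ (f i).order
      · simpa only [g, if_pos hi] using hi
      · simp [g, hi]
  have hmk := Ideal.mem_map_of_mem (Ideal.Quotient.mk (ultraIdeal _ U)) hg
  rw [Ideal.map_pow, Ideal.map_span, ← Set.range_comp] at hmk
  rwa [hfg]

theorem ker_ultraCoeffHom [Finite σ] :
    RingHom.ker (ultraCoeffHom (σ := σ) R U) = ⨅ d : ℕ, Ideal.span (Set.range fun j : σ =>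
      Ideal.Quotient.mk (ultraIdeal (fun i => MvPowerSeries σ (R i)) U)
        fun i => (X j : MvPowerSeries σ (R i))) ^ d := by
  refine le_antisymm (fun x hx => Submodule.mem_iInf _ |>.mpr fun d => ?_) fun x hx => ?_
  · obtain ⟨f, rfl⟩ := Ideal.Quotient.mk_surjective x
    exact mk_mem_pow_span_X_of_eventually_le_order R U (eventually_le_order_of_mem_ker R U hx d)
  · rw [RingHom.mem_ker, ← Ideal.mem_bot, ← iInf_pow_span_X_eq_bot, Submodule.mem_iInf]
    intro d
    rw [← map_ultraCoeffHom_span_X, ← Ideal.map_pow]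
    exact Ideal.mem_map_of_mem _ (Submodule.mem_iInf _ |>.mp hx d)

end Ultraproduct

set_option synthInstance.maxHeartbeats 1000000 in
theorem stmt8_general {ι : Type} (U : Ultrafilter ι)
    (K : ι → Type) [∀ i, Field (K i)] (n : ℕ) :
    letI P := ∀ i, K i
    letI Q := ∀ i, MvPowerSeries (Fin n) (K i)
    letI IU := ultraIdeal K U
    letI JU := ultraIdeal (fun i => MvPowerSeries (Fin n) (K i)) U
    letI 𝔛 : Ideal (Q ⧸ JU) := Ideal.span
      (Set.range fun j : Fin n =>
        Ideal.Quotient.mk JU (fun i => (MvPowerSeries.X j : MvPowerSeries (Fin n) (K i))))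
    ∃ π : (Q ⧸ JU) →+* MvPowerSeries (Fin n) (P ⧸ IU),
      Function.Surjective π ∧
      (∀ a : P, π (Ideal.Quotient.mk JU (fun i => MvPowerSeries.C (σ := Fin n) (R := K i) (a i))) =
        MvPowerSeries.C (σ := Fin n) (R := P ⧸ IU) (Ideal.Quotient.mk IU a)) ∧
      (∀ j : Fin n, π (Ideal.Quotient.mk JU
          (fun i => (MvPowerSeries.X j : MvPowerSeries (Fin n) (K i)))) =
        MvPowerSeries.X j) ∧
      RingHom.ker π = ⨅ d : ℕ, 𝔛 ^ d :=
  ⟨ultraCoeffHom K U, ultraCoeffHom_surjective K U, ultraCoeffHom_mk_C K U, ultraCoeffHom_mk_X K U,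
    ker_ultraCoeffHom K U⟩

set_option synthInstance.maxHeartbeats 1000000 in
theorem stmt8 {ι : Type} [Infinite ι] (U : Ultrafilter ι)
    (hU : ∀ s : Set ι, s.Finite → s ∉ U)
    (K : ι → Type) [∀ i, Field (K i)] (n : ℕ) :
    letI P := ∀ i, K i
    letI Q := ∀ i, MvPowerSeries (Fin n) (K i)
    letI IU := ultraIdeal K U
    letI JU := ultraIdeal (fun i => MvPowerSeries (Fin n) (K i)) U
    letI 𝔛 : Ideal (Q ⧸ JU) := Ideal.span
      (Set.range fun j : Fin n =>
        Ideal.Quotient.mk JU (fun i => (MvPowerSeries.X j : MvPowerSeries (Fin n) (K i))))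
    ∃ π : (Q ⧸ JU) →+* MvPowerSeries (Fin n) (P ⧸ IU),
      Function.Surjective π ∧
      (∀ a : P, π (Ideal.Quotient.mk JU (fun i => MvPowerSeries.C (σ := Fin n) (R := K i) (a i))) =
        MvPowerSeries.C (σ := Fin n) (R := P ⧸ IU) (Ideal.Quotient.mk IU a)) ∧
      (∀ j : Fin n, π (Ideal.Quotient.mk JU
          (fun i => (MvPowerSeries.X j : MvPowerSeries (Fin n) (K i)))) =
        MvPowerSeries.X j) ∧
      RingHom.ker π = ⨅ d : ℕ, 𝔛 ^ d :=
  stmt8_general U K n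
end

section
/- Let T ⊆ T' be an extension of commutative integral domains such that T' is flat as a T-module, and let F and F' be the fraction fields of T and T', respectively, with the canonical inclusions T[Y] ⊆ T'[Y] ⊆ F'[Y] and T[Y] ⊆ F[Y] ⊆ F'[Y] of multivariate polynomial rings in the variables Y = (Y_1, …, Y_m). Let I be a finitely generated ideal of T[Y]. Then, as ideals of T'[Y]: IF'[Y] ∩ T'[Y] = (IF[Y] ∩ T[Y])·T'[Y]. In other words, the contraction to T'[Y] of the extension of I to F'[Y] equals the extension to T'[Y] of the contraction to T[Y] of the extension of I to F[Y]. -/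
/-!
Let `J = IF[Y] ∩ T[Y]`: it is the kernel of `g : T[Y] → F[Y]/IF[Y]`, a map of `T`-algebras whose
target is flat over `T` (it is free over the field `F`, which is flat over `T`). Base change of `g`
along a flat `T`-algebra `S` has kernel `J·S[Y]`. For `S = F'` this is `JF'[Y] = IF'[Y]`; for
`S = T'` it is `JT'[Y]`. Finally, flatness of `F[Y]/IF[Y]` keeps `T' ⊗ F[Y]/IF[Y] → F' ⊗ F[Y]/IF[Y]`
injective, so the kernel of the base change along `T'` is the contraction of the one along `F'`.
-/

open TensorProduct

theorem Algebra.TensorProduct.lTensor_ker_of_flat {R S A C D : Type*} [CommRing R] [CommRing S]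
    [Algebra R S] [Ring A] [Algebra R A] [Algebra S A] [IsScalarTower R S A] [Module.Flat R A]
    [Ring C] [Ring D] [Algebra R C] [Algebra R D] (g : C →ₐ[R] D) :
    RingHom.ker (map (AlgHom.id S A) g) =
      (RingHom.ker g).map (includeRight : C →ₐ[R] A ⊗[R] C) := by
  rw [← Submodule.restrictScalars_inj R, Ideal.map_includeRight_eq]
  exact (Module.Flat.lTensor_exact A g.toLinearMap.exact_subtype_ker_map).linearMap_ker_eq

namespace MvPolynomial

theorem map_comp_map {R S₁ S₂ σ : Type*} [CommSemiring R] [CommSemiring S₁] [CommSemiring S₂]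
    (f : R →+* S₁) (g : S₁ →+* S₂) :
    (map g).comp (map f) = (map (g.comp f) : MvPolynomial σ R →+* MvPolynomial σ S₂) :=
  RingHom.ext (map_map f g)

section BaseChange

variable {R : Type*} (S : Type*) {σ D : Type*} [CommRing R] [CommRing S] [Ring D]
  [Algebra R S] [Algebra R D]

noncomputable def baseChangeAlgHom (g : MvPolynomial σ R →ₐ[R] D) :
    MvPolynomial σ S →ₐ[S] S ⊗[R] D :=
  (Algebra.TensorProduct.map (AlgHom.id S S) g).comp (algebraTensorAlgEquiv R S).symm.toAlgHom

theorem ker_baseChangeAlgHom [Module.Flat R S] (g : MvPolynomial σ R →ₐ[R] D) :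
    RingHom.ker (baseChangeAlgHom S g) = (RingHom.ker g).map (map (algebraMap R S)) := by
  set e := algebraTensorAlgEquiv (σ := σ) R S
  have he : (e : S ⊗[R] MvPolynomial σ R →+* MvPolynomial σ S).comp
      Algebra.TensorProduct.includeRight.toRingHom = map (algebraMap R S) := by
    ext p <;> simp [e]
  have hker : RingHom.ker (baseChangeAlgHom S g) =
      (RingHom.ker (Algebra.TensorProduct.map (AlgHom.id S S) g)).comap e.toRingEquiv.symm :=
    rfl
  rw [hker, Ideal.comap_symm, Algebra.TensorProduct.lTensor_ker_of_flat, ← he, ← Ideal.map_map]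
  rfl

theorem baseChangeAlgHom_map_algebraMap (L : Type*) [CommRing L] [Algebra S L] [Algebra R L]
    [IsScalarTower R S L] (g : MvPolynomial σ R →ₐ[R] D) (f : MvPolynomial σ S) :
    Algebra.TensorProduct.map (IsScalarTower.toAlgHom R S L) (AlgHom.id R D)
      (baseChangeAlgHom S g f) = baseChangeAlgHom L g (map (algebraMap S L) f) := by
  induction f using MvPolynomial.induction_on with
  | C s => simp [baseChangeAlgHom]
  | add p q hp hq => simp only [map_add, hp, hq]
  | mul_X p i hp =>
    rw [map_mul, map_mul, hp, map_mul, map_X]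
    simp [baseChangeAlgHom]

theorem comap_ker_baseChangeAlgHom (L : Type*) [CommRing L] [Algebra S L] [Algebra R L]
    [IsScalarTower R S L] [Module.Flat R D] (hSL : Function.Injective (algebraMap S L))
    (g : MvPolynomial σ R →ₐ[R] D) :
    (RingHom.ker (baseChangeAlgHom L g)).comap (map (algebraMap S L)) =
      RingHom.ker (baseChangeAlgHom S g) := by
  have hinj : Function.Injective
      (Algebra.TensorProduct.map (IsScalarTower.toAlgHom R S L) (AlgHom.id R D)) :=
    Module.Flat.rTensor_preserves_injective_linearMap (M := D)
      (IsScalarTower.toAlgHom R S L).toLinearMap hSL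
  ext f
  rw [Ideal.mem_comap, RingHom.mem_ker, RingHom.mem_ker, ← baseChangeAlgHom_map_algebraMap,
    map_eq_zero_iff _ hinj]

end BaseChange

theorem comap_map_eq_map_comap_map_of_flat {R S K L σ : Type*} [CommRing R] [CommRing S]
    [Field K] [CommRing L] [Algebra R S] [Algebra R K] [Algebra S L] [Algebra R L]
    [IsScalarTower R S L] [Module.Flat R S] [Module.Flat R K] [Module.Flat R L]
    (hSL : Function.Injective (algebraMap S L))
    (φ : K →+* L) (hφ : φ.comp (algebraMap R K) = algebraMap R L) (I : Ideal (MvPolynomial σ R)) :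
    (I.map (map (algebraMap R L))).comap (map (algebraMap S L)) =
      ((I.map (map (algebraMap R K))).comap (map (algebraMap R K))).map (map (algebraMap R S)) := by
  set IK := I.map (map (algebraMap R K))
  let g : MvPolynomial σ R →ₐ[R] MvPolynomial σ K ⧸ IK :=
    (Ideal.Quotient.mkₐ R IK).comp (mapAlgHom (Algebra.ofId R K))
  have hg : RingHom.ker g = IK.comap (map (algebraMap R K)) := by
    ext p
    simp [g, Ideal.Quotient.eq_zero_iff_mem]
  have : Module.Flat R (MvPolynomial σ K ⧸ IK) := Module.Flat.trans R K _
  calc (I.map (map (algebraMap R L))).comap (map (algebraMap S L))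
      _ = ((RingHom.ker g).map (map (algebraMap R L))).comap (map (algebraMap S L)) := by
        rw [hg, ← hφ, ← map_comp_map, ← Ideal.map_map, ← Ideal.map_map, Ideal.map_comap_map]
      _ = (RingHom.ker (baseChangeAlgHom L g)).comap (map (algebraMap S L)) := by
        rw [ker_baseChangeAlgHom L g]
      _ = _ := by
        rw [comap_ker_baseChangeAlgHom S L hSL, ker_baseChangeAlgHom S g, hg]

end MvPolynomial

theorem stmt13_general (T T' : Type) [CommRing T] [IsDomain T] [CommRing T']
    [Algebra T T'] [Module.Flat T T']
    (m : ℕ) (I : Ideal (MvPolynomial (Fin m) T))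
    (φ : FractionRing T →+* FractionRing T')
    (hφ : ∀ t : T, φ (algebraMap T (FractionRing T) t) =
      algebraMap T' (FractionRing T') (algebraMap T T' t)) :
    Ideal.comap (MvPolynomial.map (algebraMap T' (FractionRing T')))
        (Ideal.map
          ((MvPolynomial.map φ).comp (MvPolynomial.map (algebraMap T (FractionRing T)))) I)
      =
    Ideal.map (MvPolynomial.map (algebraMap T T'))
        (Ideal.comap (MvPolynomial.map (algebraMap T (FractionRing T)))
          (Ideal.map (MvPolynomial.map (algebraMap T (FractionRing T))) I)) := by
  have hφT : φ.comp (algebraMap T (FractionRing T)) = algebraMap T (FractionRing T') :=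
    RingHom.ext fun t => by simp [hφ, ← IsScalarTower.algebraMap_apply]
  rw [MvPolynomial.map_comp_map, hφT]
  exact MvPolynomial.comap_map_eq_map_comap_map_of_flat
    (IsFractionRing.injective T' (FractionRing T')) φ hφT I

theorem stmt13 (T T' : Type) [CommRing T] [IsDomain T] [CommRing T'] [IsDomain T']
    [Algebra T T'] (hinj : Function.Injective (algebraMap T T')) [Module.Flat T T']
    (m : ℕ) (I : Ideal (MvPolynomial (Fin m) T)) (hI : I.FG)
    (φ : FractionRing T →+* FractionRing T')
    (hφ : ∀ t : T, φ (algebraMap T (FractionRing T) t) =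
      algebraMap T' (FractionRing T') (algebraMap T T' t)) :
    Ideal.comap (MvPolynomial.map (algebraMap T' (FractionRing T')))
        (Ideal.map
          ((MvPolynomial.map φ).comp (MvPolynomial.map (algebraMap T (FractionRing T)))) I)
      =
    Ideal.map (MvPolynomial.map (algebraMap T T'))
        (Ideal.comap (MvPolynomial.map (algebraMap T (FractionRing T)))
          (Ideal.map (MvPolynomial.map (algebraMap T (FractionRing T))) I)) :=
  stmt13_general T T' m I φ hφ
end

section
/- Let S be a commutative ring, J an ideal of S, and z ∈ S an element satisfying an integral relation z^d + a_1 z^{d−1} + ⋯ + a_{d−1} z + a_d = 0 with a_i ∈ J^i for each i = 1, …, d. Then for every N ∈ ℕ one has J^{d−1} z^N ⊆ J^N, that is, y·z^N ∈ J^N for every y ∈ J^{d−1}. -/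
theorem stmt14 (S : Type) [CommRing S] (J : Ideal S) (z : S) (d : ℕ) (a : Fin d → S)
    (ha : ∀ i : Fin d, a i ∈ J ^ ((i : ℕ) + 1))
    (hrel : z ^ d + ∑ i : Fin d, a i * z ^ (d - 1 - (i : ℕ)) = 0) :
    ∀ N : ℕ, ∀ y ∈ J ^ (d - 1), y * z ^ N ∈ J ^ N := by
  intro N
  induction N using Nat.strong_induction_on with
  | _ N ih =>
    intro y hy
    by_cases hd : d = 0
    · subst hd
      simp only [pow_zero, Finset.univ_eq_empty, Finset.sum_empty, add_zero] at hrel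
      have : y * z ^ N = 0 := by
        rw [← mul_one (y * z ^ N), hrel, mul_zero]
      rw [this]; exact zero_mem _
    · rcases lt_or_ge N d with h | h
      · exact Ideal.pow_le_pow_right (by omega) (Ideal.mul_mem_right _ _ hy)
      · have hz : z ^ d = -∑ i : Fin d, a i * z ^ (d - 1 - (i : ℕ)) :=
          eq_neg_of_add_eq_zero_left hrel
        have key : y * z ^ N = ∑ i : Fin d, -(a i * (y * z ^ (N - 1 - (i : ℕ)))) := by
          have h1 : y * z ^ N = y * z ^ (N - d) * z ^ d := by
            rw [mul_assoc, ← pow_add]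
            congr 2
            omega
          rw [h1, hz, mul_neg, Finset.mul_sum, ← Finset.sum_neg_distrib]
          apply Finset.sum_congr rfl
          intro i _
          congr 1
          rw [show (N - 1 - (i : ℕ)) = (N - d) + (d - 1 - (i : ℕ)) from by omega, pow_add]
          ring
        rw [key]
        apply Ideal.sum_mem
        intro i _
        apply neg_mem
        have hmem := ih (N - 1 - (i : ℕ)) (by omega) y hy
        have hm := Ideal.mul_mem_mul (ha i) hmem
        rw [← pow_add] at hm
        have he : (i : ℕ) + 1 + (N - 1 - (i : ℕ)) = N := by have := i.isLt; omega
        rwa [he] at hm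
end
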